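/- Let φ be a Leibniz 2-cocycle on the twisted Schrödinger-Virasoro algebra such that φ(L_0, ·) and φ(·, L_0) vanish on all basis elements and φ(L_{-1},M_1) = 0, φ(L_n, M_{-n}) = n(n−1)c_1 + n(n−2)c_2 with c_1 + c_2 = 0. Then φ(Y_n, Y_{−n}) = 2·φ(L_n, M_{−n}) = 2n·c_1 for all n ∈ ℤ, φ(Y_0, Y_0) = 0, and φ(Y_m, Y_n) = 0 when m + n ≠ 0. -/
import Mathlib


abbrev B : Type := ℤ ⊕ ℤ ⊕ ℤ
abbrev V : Type := B →₀ ℂ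

noncomputable def Lg (n : ℤ) : V := Finsupp.single (Sum.inl n) 1
noncomputable def Yg (n : ℤ) : V := Finsupp.single (Sum.inr (Sum.inl n)) 1
noncomputable def Mg (n : ℤ) : V := Finsupp.single (Sum.inr (Sum.inr n)) 1

/-- Bracket on basis elements of the twisted Schrödinger–Virasoro algebra. -/
noncomputable def brB : B → B → V
  | Sum.inl n, Sum.inl m => ((m : ℂ) - n) • Lg (n + m)
  | Sum.inl n, Sum.inr (Sum.inl m) => ((m : ℂ) - n / 2) • Yg (n + m)
  | Sum.inl n, Sum.inr (Sum.inr p) => (p : ℂ) • Mg (n + p)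
  | Sum.inr (Sum.inl m), Sum.inl n => -(((m : ℂ) - n / 2) • Yg (n + m))
  | Sum.inr (Sum.inr p), Sum.inl n => -((p : ℂ) • Mg (n + p))
  | Sum.inr (Sum.inl m), Sum.inr (Sum.inl m') => ((m' : ℂ) - m) • Mg (m + m')
  | _, _ => 0

/-- The bilinear extension of the bracket to the whole space. -/
noncomputable def bk : V →ₗ[ℂ] V →ₗ[ℂ] V :=
  Finsupp.lsum ℂ fun a => LinearMap.toSpanSingleton ℂ (V →ₗ[ℂ] V)
    (Finsupp.lsum ℂ fun b => LinearMap.toSpanSingleton ℂ V (brB a b))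

lemma bk_single (a b : B) : bk (Finsupp.single a 1) (Finsupp.single b 1) = brB a b := by
  simp [bk]

lemma bk_LY (n m : ℤ) : bk (Lg n) (Yg m) = ((m : ℂ) - n / 2) • Yg (n + m) := by
  rw [Lg, Yg, bk_single, brB]

lemma bk_YL (m n : ℤ) : bk (Yg m) (Lg n) = -(((m : ℂ) - n / 2) • Yg (n + m)) := by
  rw [Lg, Yg, bk_single, brB]

lemma bk_YY (m m' : ℤ) : bk (Yg m) (Yg m') = ((m' : ℂ) - m) • Mg (m + m') := by
  rw [Yg, Yg, bk_single, brB]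

/-- `φ` is a Leibniz 2-cocycle on the twisted Schrödinger–Virasoro algebra. -/
def IsLeibnizCocycle (φ : V →ₗ[ℂ] V →ₗ[ℂ] ℂ) : Prop :=
  ∀ x y z : V, φ x (bk y z) = φ (bk x y) z - φ (bk x z) y

theorem stmt13 (φ : V →ₗ[ℂ] V →ₗ[ℂ] ℂ) (hco : IsLeibnizCocycle φ)
    (hL0 : ∀ b : B, φ (Lg 0) (Finsupp.single b 1) = 0 ∧ φ (Finsupp.single b 1) (Lg 0) = 0)
    (h1 : φ (Lg (-1)) (Mg 1) = 0) (c1 c2 : ℂ)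
    (hLM : ∀ n : ℤ, φ (Lg n) (Mg (-n)) =
      (n : ℂ) * ((n : ℂ) - 1) * c1 + (n : ℂ) * ((n : ℂ) - 2) * c2)
    (hc : c1 + c2 = 0) :
    (∀ n : ℤ, φ (Yg n) (Yg (-n)) = 2 * φ (Lg n) (Mg (-n)) ∧
      φ (Yg n) (Yg (-n)) = 2 * (n : ℂ) * c1) ∧
    φ (Yg 0) (Yg 0) = 0 ∧
    (∀ m n : ℤ, m + n ≠ 0 → φ (Yg m) (Yg n) = 0) := by
  have hm1 := hLM (-1)
  norm_num [h1] at hm1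
  -- hm1 should say 0 = 2*c1 + 3*c2 (or similar)
  have hc1 : c1 = 0 := by linear_combination 3 * hc + hm1
  have hc2 : c2 = 0 := by linear_combination hc - hc1
  have g : ∀ n : ℤ, φ (Lg n) (Mg (-n)) = 0 := by
    intro n; rw [hLM n, hc1, hc2]; ring
  have hML0 : ∀ p : ℤ, φ (Mg p) (Lg 0) = 0 := by
    intro p
    have := (hL0 (Sum.inr (Sum.inr p))).2
    rwa [← Mg] at this
  have off : ∀ m n : ℤ, m + n ≠ 0 → φ (Yg m) (Yg n) = 0 := by
    intro m n h
    have key := hco (Yg m) (Lg 0) (Yg n)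
    rw [bk_LY, bk_YL, bk_YY] at key
    simp only [map_smul, map_neg, LinearMap.smul_apply, LinearMap.neg_apply, smul_eq_mul,
      zero_add, Int.cast_zero] at key
    rw [hML0 (m + n)] at key
    have hmn : ((m : ℂ) + n) ≠ 0 := by
      have : ((m + n : ℤ) : ℂ) ≠ 0 := Int.cast_ne_zero.mpr h
      push_cast at this; exact this
    have h2 : ((m : ℂ) + n) * φ (Yg m) (Yg n) = 0 := by linear_combination key
    exact (mul_eq_zero.mp h2).resolve_left hmn
  have E : ∀ n m : ℤ, ((m : ℂ) - n / 2) * φ (Yg (n + m)) (Yg (-(n + m)))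
      + (3 * n / 2 + m) * φ (Yg (-m)) (Yg m) = 0 := by
    intro n m
    have key := hco (Lg n) (Yg m) (Yg (-n - m))
    rw [bk_YY, bk_LY, bk_LY] at key
    rw [show m + (-n - m) = -n from by ring, show n + (-n - m) = -m from by ring,
      show (-n - m : ℤ) = -(n + m) from by ring] at key
    simp only [map_smul, LinearMap.smul_apply, smul_eq_mul] at key
    rw [g n] at key
    push_cast at key
    linear_combination -key
  have f1 : ∀ n : ℤ, (n : ℂ) ≠ 0 → φ (Yg n) (Yg (-n)) = 3 * φ (Yg 0) (Yg 0) := by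
    intro n hn
    have h := E n 0
    norm_num at h
    have h2 : (n : ℂ) * (φ (Yg n) (Yg (-n)) - 3 * φ (Yg 0) (Yg 0)) = 0 := by
      linear_combination (-2 : ℂ) * h
    have h3 := (mul_eq_zero.mp h2).resolve_left hn
    linear_combination h3
  have f0 : φ (Yg 0) (Yg 0) = 0 := by
    have h := E 1 1
    norm_num at h
    have hf := f1 (-1) (by norm_num)
    norm_num at hf
    rw [f1 2 (by norm_num), hf] at h
    linear_combination h / 9
  have fz : ∀ n : ℤ, φ (Yg n) (Yg (-n)) = 0 := by
    intro n
    by_cases hn : n = 0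
    · subst hn; simpa using f0
    · rw [f1 n (Int.cast_ne_zero.mpr hn), f0]; ring
  refine ⟨fun n => ⟨?_, ?_⟩, f0, off⟩
  · rw [fz n, g n]; ring
  · rw [fz n, hc1]; ring
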